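/- arXiv:2305.19399 — 3 statements merged into one kernel-verified Lean document; each statement's English description precedes it below -/
import Mathlib

section
/- Let 0 < μ < 1, let P ≠ E be points in ℝ², and let u be any unit vector (the evader's heading). Then there exists a unique r > 0 such that dist(P, E + (μ r) • u) = r. Consequently, for every evader heading, the evader's forward ray intersects the Apollonius circle of (P, E, μ) in exactly one point, so the pursuer can always intercept the slower evader. -/
/-!
The gap `r ↦ r - dist P (E + r • w)` between the pursuer's and the evader's distances is
continuous, negative at `r = 0` and, because the evader is slower (`‖w‖ < 1`), strictly
increasing with slope at least `1 - ‖w‖`. Hence it has exactly one zero, and that zero is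
positive.
-/

section Interception

variable {V : Type*} [NormedAddCommGroup V] [NormedSpace ℝ V]

lemma dist_add_smul_add_smul (E w : V) (s t : ℝ) :
    dist (E + s • w) (E + t • w) = |s - t| * ‖w‖ := by
  rw [dist_add_left, dist_eq_norm, ← sub_smul, norm_smul, Real.norm_eq_abs]

lemma strictMono_sub_dist_add_smul (P E : V) {w : V} (hw : ‖w‖ < 1) :
    StrictMono fun r : ℝ => r - dist P (E + r • w) := by
  intro s t hst
  have htriangle := dist_triangle P (E + s • w) (E + t • w)
  rw [dist_add_smul_add_smul, abs_sub_comm, abs_of_pos (sub_pos.2 hst)] at htriangle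
  have hslower : (t - s) * ‖w‖ < t - s := mul_lt_of_lt_one_right (sub_pos.2 hst) hw
  dsimp only
  linarith

theorem existsUnique_pos_dist_add_smul_eq_self (P E : V) (hPE : P ≠ E) {w : V}
    (hw : ‖w‖ < 1) : ∃! r : ℝ, 0 < r ∧ dist P (E + r • w) = r := by
  set gap : ℝ → ℝ := fun r => r - dist P (E + r • w) with hgap
  have hmono : StrictMono gap := strictMono_sub_dist_add_smul P E hw
  have hgap_zero : gap 0 = -dist P E := by simp [hgap]
  have hPE_pos : 0 < dist P E := dist_pos.2 hPE
  -- `R` solves `R - (dist P E + R * ‖w‖) = 0`, the worst case of the triangle inequality.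
  set R := dist P E / (1 - ‖w‖)
  have hR_pos : 0 < R := div_pos hPE_pos (sub_pos.2 hw)
  have hgap_R : 0 ≤ gap R := by
    have htriangle := dist_triangle P E (E + R • w)
    have hstep : dist E (E + R • w) = R * ‖w‖ := by
      simpa [abs_of_pos hR_pos] using dist_add_smul_add_smul E w 0 R
    have hR_eq : R * (1 - ‖w‖) = dist P E := div_mul_cancel₀ _ (sub_pos.2 hw).ne'
    simp only [hgap]
    linarith
  obtain ⟨r, -, hr⟩ : ∃ r ∈ Set.Icc 0 R, gap r = 0 :=
    intermediate_value_Icc hR_pos.le (by fun_prop) ⟨by linarith, hgap_R⟩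
  have hr_pos : 0 < r := hmono.lt_iff_lt.1 (by linarith)
  refine ⟨r, ⟨hr_pos, by simp only [hgap] at hr; linarith⟩, ?_⟩
  rintro r' ⟨-, hr'⟩
  exact hmono.injective (by simp only [hgap, hr']; linarith)

end Interception

/-- **Guaranteed interception of a slower evader.** For `0 < μ < 1`, `P ≠ E`,
and any unit heading `u` of the evader, there is a unique `r > 0` with
`dist P (E + (μ r) • u) = r`: the evader's forward ray meets the Apollonius
circle of `(P, E, μ)` in exactly one point, so the pursuer can always
intercept the slower evader. -/
theorem evader_ray_meets_apollonius_uniquely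
    (μ : ℝ) (hμ0 : 0 < μ) (hμ1 : μ < 1)
    (P E : EuclideanSpace ℝ (Fin 2)) (hPE : P ≠ E)
    (u : EuclideanSpace ℝ (Fin 2)) (hu : ‖u‖ = 1) :
    ∃! r : ℝ, 0 < r ∧ dist P (E + (μ * r) • u) = r := by
  have hslower : ‖μ • u‖ < 1 := by
    rwa [norm_smul, hu, mul_one, Real.norm_of_nonneg hμ0.le]
  simpa only [mul_comm μ, mul_smul] using
    existsUnique_pos_dist_add_smul_eq_self P E hPE hslower
end

section
/- Let 0 < μ < 1, let P ≠ E be points in ℝ² with d = dist(P, E), and let u be a unit vector with c = ⟪u, E − P⟫ / d (so c = cos σ_E, where σ_E is the angle between the evader's heading u and the line of sight from P to E). Then the unique r > 0 satisfying dist(P, E + (μ r) • u) = r is given by r = d · (μ c + √(1 − μ²(1 − c²))) / (1 − μ²); equivalently, r = d (μ cos σ_E + √(1 − μ² sin² σ_E)) / (1 − μ²). -/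
open scoped RealInnerProductSpace

/-- **Pursuer travel-distance formula (Eq. (22)).** With `0 < μ < 1`, `P ≠ E`,
`d = dist P E`, evader unit heading `u`, and `c = ⟪u, E - P⟫ / d` (the cosine of
the angle `σ_E` between the evader's heading and the line of sight from `P` to
`E`), the unique `r > 0` with `dist P (E + (μ r) • u) = r` is
`r = d (μ c + √(1 - μ² (1 - c²))) / (1 - μ²)`. -/
theorem pursuer_travel_distance_formula
    (μ : ℝ) (hμ0 : 0 < μ) (hμ1 : μ < 1)
    (P E : EuclideanSpace ℝ (Fin 2)) (hPE : P ≠ E)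
    (u : EuclideanSpace ℝ (Fin 2)) (hu : ‖u‖ = 1)
    (d c r : ℝ) (hd : d = dist P E) (hc : c = ⟪u, E - P⟫ / d)
    (hr : 0 < r) (hI : dist P (E + (μ * r) • u) = r) :
    r = d * (μ * c + Real.sqrt (1 - μ ^ 2 * (1 - c ^ 2))) / (1 - μ ^ 2) := by
  have hd0 : 0 < d := hd ▸ dist_pos.mpr hPE
  set s := Real.sqrt (1 - μ ^ 2 * (1 - c ^ 2)) with hs
  have hpos : (0:ℝ) < 1 - μ ^ 2 * (1 - c ^ 2) := by nlinarith [sq_nonneg (μ * c)]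
  have hs2 : s ^ 2 = 1 - μ ^ 2 * (1 - c ^ 2) := Real.sq_sqrt hpos.le
  have hs0 : 0 < s := Real.sqrt_pos.mpr hpos
  have hinner : ⟪E - P, u⟫ = c * d := by
    rw [real_inner_comm, hc]; field_simp
  have hquad : d ^ 2 + 2 * (μ * r) * (c * d) + (μ * r) ^ 2 = r ^ 2 := by
    have h1 : ‖(E - P) + (μ * r) • u‖ ^ 2 = r ^ 2 := by
      have : (E + (μ * r) • u) - P = (E - P) + (μ * r) • u := by abel
      rw [← this, ← dist_eq_norm', hI]
    rw [norm_add_sq_real, real_inner_smul_right, hinner, norm_smul, hu] at h1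
    simp only [Real.norm_eq_abs, abs_of_pos (mul_pos hμ0 hr)] at h1
    have hnd : ‖E - P‖ = d := by rw [hd, dist_eq_norm']
    rw [hnd] at h1
    nlinarith [h1]
  have hμ2 : (0:ℝ) < 1 - μ ^ 2 := by nlinarith
  have key : ((1 - μ ^ 2) * r - d * (μ * c + s)) * ((1 - μ ^ 2) * r - d * (μ * c - s)) = 0 := by
    linear_combination (-(1 - μ ^ 2)) * hquad - d ^ 2 * hs2
  have hcs : μ * c < s := by nlinarith [sq_nonneg (s + μ * c), sq_nonneg c]
  have h2 : (1 - μ ^ 2) * r - d * (μ * c - s) > 0 := by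
    have : d * (μ * c - s) < 0 := mul_neg_of_pos_of_neg hd0 (by linarith)
    nlinarith
  rcases mul_eq_zero.mp key with h | h
  · field_simp
    linarith
  · linarith
end

section
/- Let 0 < μ < 1, v_P > 0, P ≠ E in ℝ², and let u be a unit vector. Let r > 0 be the unique solution of dist(P, E + (μ r) • u) = r, and set T* = r / v_P. Then for any differentiable γ : ℝ → ℝ² with γ(0) = P, ‖γ′(t)‖ ≤ v_P for all t ≥ 0, and γ(T) = E + (μ v_P T) • u for some T ≥ 0, one has T ≥ T*. Moreover the straight-line pursuit from P toward I = E + (μ r) • u at speed v_P achieves interception at time exactly T*. Hence the straight-line path to the Apollonius intersection point is the minimum-time interception strategy against a non-maneuvering evader. -/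
/-- **Phase-II min-time optimality (Section III.B).** The evader moves along
`t ↦ E + (μ v_P t) • u` at speed `μ v_P` with `0 < μ < 1`.  Let `r > 0` be the
unique solution of `dist P (E + (μ r) • u) = r` and `T* = r / v_P`.  Then any
differentiable pursuer curve `γ` with `γ 0 = P` and speed `≤ v_P` that is
collocated with the evader at some time `T ≥ 0` satisfies `T ≥ T*`.  Moreover,
straight-line pursuit from `P` toward the Apollonius intersection point
`I = E + (μ r) • u` at speed `v_P` is exactly at the evader's position at time
`T*`, so the straight-line path achieves minimum-time interception. -/
theorem straight_line_pursuit_min_time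
    (μ v_P : ℝ) (hμ0 : 0 < μ) (hμ1 : μ < 1) (hvP : 0 < v_P)
    (P E : EuclideanSpace ℝ (Fin 2)) (hPE : P ≠ E)
    (u : EuclideanSpace ℝ (Fin 2)) (hu : ‖u‖ = 1)
    (r : ℝ) (hr : 0 < r) (hrI : dist P (E + (μ * r) • u) = r)
    (T_star : ℝ) (hT : T_star = r / v_P) :
    (∀ γ : ℝ → EuclideanSpace ℝ (Fin 2), Differentiable ℝ γ → γ 0 = P →
      (∀ t : ℝ, 0 ≤ t → ‖deriv γ t‖ ≤ v_P) →
      ∀ T : ℝ, 0 ≤ T → γ T = E + (μ * (v_P * T)) • u → T_star ≤ T) ∧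
    P + (v_P * T_star) • (‖(E + (μ * r) • u) - P‖⁻¹ • ((E + (μ * r) • u) - P)) =
      E + (μ * (v_P * T_star)) • u := by
  have hvT : v_P * T_star = r := by
    rw [hT]; field_simp
  constructor
  · intro γ hγ h0 hspeed T hT0 hγT
    by_contra h
    push_neg at h
    set s : ℝ := v_P * T with hs
    have hsr : s < r := by
      have : T < r / v_P := hT ▸ h
      calc s = v_P * T := rfl
        _ < v_P * (r / v_P) := by
            exact mul_lt_mul_of_pos_left this hvP
        _ = r := by field_simp
    have hs0 : 0 ≤ s := mul_nonneg hvP.le hT0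
    -- speed bound gives ‖γ T - γ 0‖ ≤ v_P * T
    have hbound : ‖γ T - γ 0‖ ≤ v_P * T := by
      have := norm_image_sub_le_of_norm_deriv_le_segment'
        (f := γ) (f' := deriv γ) (a := 0) (b := T) (C := v_P)
        (fun x _ => (hγ x).hasDerivAt.hasDerivWithinAt)
        (fun x hx => hspeed x hx.1) T (Set.right_mem_Icc.2 hT0)
      simpa using this
    -- distance from P to evader at s exceeds s when s < r
    have hdist2 : dist (E + (μ * r) • u) (E + (μ * s) • u) = μ * (r - s) := by
      rw [dist_eq_norm]
      have : (E + (μ * r) • u) - (E + (μ * s) • u) = (μ * r - μ * s) • u := by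
        rw [sub_smul]; abel
      rw [this, norm_smul, hu, mul_one]
      rw [Real.norm_eq_abs, abs_of_nonneg (by nlinarith), mul_sub]
    have htri : r ≤ dist P (E + (μ * s) • u) + μ * (r - s) := by
      calc r = dist P (E + (μ * r) • u) := hrI.symm
        _ ≤ dist P (E + (μ * s) • u) + dist (E + (μ * s) • u) (E + (μ * r) • u) :=
            dist_triangle _ _ _
        _ = dist P (E + (μ * s) • u) + μ * (r - s) := by
            rw [dist_comm (E + (μ * s) • u) (E + (μ * r) • u), hdist2]
    have hgt : s < dist P (E + (μ * s) • u) := by nlinarith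
    have hle : dist P (E + (μ * s) • u) ≤ s := by
      have heq : γ T - γ 0 = (E + (μ * s) • u) - P := by rw [hγT, h0]
      have : dist P (E + (μ * s) • u) = ‖γ T - γ 0‖ := by
        rw [heq, dist_eq_norm']
      rw [this]; exact hbound
    linarith
  · have hnorm : ‖(E + (μ * r) • u) - P‖ = r := by
      have h2 := hrI
      rwa [dist_eq_norm'] at h2
    rw [hvT, hnorm, smul_smul, mul_inv_cancel₀ hr.ne', one_smul]
    abel
end
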